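/- For any γ ∈ Γ with γ ≠ 0 and any finitely supported family (f_{0,1,δ})_{δ∈Γ} in F satisfying 2(γ²−α²) f_{0,1,γ} = (γ+2α)² f_{0,1,α+γ} + (γ−2α)² f_{0,1,γ−α} for all α ∈ Γ, one has f_{0,1,γ} = 0. -/

import Mathlib

/-! Since `f` is finitely supported and `Γ` is infinite, some `α ≠ ±γ` puts both `α + γ` and
`γ - α` outside the support of `f`. For that `α` the relation reads `2(γ² - α²) f(γ) = 0`, and
`γ² - α² = (γ - α)(γ + α) ≠ 0`. -/

theorem exists_apply_add_eq_zero_and_apply_sub_eq_zero {G M : Type*} [AddCommGroup G]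
    [Infinite G] [Zero M] {f : G → M} (hf : (Function.support f).Finite) (γ : G) :
    ∃ α, f (α + γ) = 0 ∧ f (γ - α) = 0 ∧ α ≠ γ ∧ α ≠ -γ := by
  have hbad : ((fun α => α + γ) ⁻¹' Function.support f ∪ (fun α => γ - α) ⁻¹' Function.support f
      ∪ {γ, -γ}).Finite :=
    ((hf.preimage (add_left_injective γ).injOn).union
      (hf.preimage (sub_right_injective (b := γ)).injOn)).union (Set.toFinite _)
  obtain ⟨α, hα⟩ := hbad.exists_notMem
  simp only [Set.mem_union, Set.mem_preimage, Function.mem_support, Set.mem_insert_iff,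
    Set.mem_singleton_iff, not_or, not_not] at hα
  exact ⟨α, hα.1.1, hα.1.2, hα.2⟩

theorem finitely_supported_relation_vanishes
    {F : Type*} [Field F] [CharZero F] (Γ : AddSubgroup F)
    (hinf : (Γ : Set F).Infinite)
    (f : Γ → F) (hfin : (Function.support f).Finite)
    (hrel : ∀ (α γ : Γ), γ ≠ 0 →
      2 * ((γ : F) ^ 2 - (α : F) ^ 2) * f γ =
        ((γ : F) + 2 * α) ^ 2 * f (α + γ) + ((γ : F) - 2 * α) ^ 2 * f (γ - α)) :
    ∀ γ : Γ, γ ≠ 0 → f γ = 0 := by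
  intro γ hγ
  have : Infinite Γ := hinf.to_subtype
  obtain ⟨α, hplus, hminus, hα, hα'⟩ := exists_apply_add_eq_zero_and_apply_sub_eq_zero hfin γ
  have hsum : (γ : F) + α ≠ 0 := fun h ↦ hα' (Subtype.ext (eq_neg_of_add_eq_zero_right h))
  have hdiff : (γ : F) - α ≠ 0 := sub_ne_zero.mpr (Subtype.coe_injective.ne hα.symm)
  have hcoef : 2 * ((γ : F) ^ 2 - (α : F) ^ 2) ≠ 0 := by
    rw [sq_sub_sq]
    exact mul_ne_zero two_ne_zero (mul_ne_zero hsum hdiff)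
  refine (mul_eq_zero.mp ?_).resolve_left hcoef
  rw [hrel α γ hγ, hplus, hminus]
  ring
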